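/- Let G be a graph on k ≥ 1 vertices and G' a graph on k' ≥ 1 vertices, and let G ∨ G' denote their join (on k + k' vertices). If P(G, n)/C(n, k) → a, P(G', n)/C(n, k') → b, and P(G ∨ G', n)/C(n, k+k') → c as n → ∞, then c ≥ ((k+k')! · k^k · k'^{k'} / (k! · k'! · (k+k')^{k+k'})) · a · b. -/

import Mathlib

open Classical in
/-- Number of `k`-element vertex subsets of `G` whose induced subgraph is isomorphic to `H`,
where `k` is the number of vertices of `H`. -/
noncomputable def inducedCount {α β : Type*} [Fintype α] [Fintype β]
    (H : SimpleGraph α) (G : SimpleGraph β) : ℕ :=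
  (Finset.univ.filter fun S : Finset β =>
    S.card = Fintype.card α ∧ Nonempty ((G.induce (S : Set β)) ≃g H)).card

/-- The maximum of `inducedCount H G` over all graphs `G` on `n` vertices. -/
noncomputable def maxInducedCount {α : Type*} [Fintype α] (H : SimpleGraph α) (n : ℕ) : ℕ :=
  sSup {m | ∃ G : SimpleGraph (Fin n), inducedCount H G = m}

/-- The join (disjunction) `G ∨ G'` of two graphs: disjoint copies of `G` and `G'` together
with all possible edges between the vertices of `G` and the vertices of `G'`. -/
def joinGraph {α β : Type*} (G : SimpleGraph α) (G' : SimpleGraph β) :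
    SimpleGraph (α ⊕ β) :=
  (G ⊕g G') ⊔ completeBipartiteGraph α β

/-!
Placing an extremal graph for `G` on `p` vertices and one for `G'` on `q` vertices side by side
and joining them, every pair of induced copies gives an induced copy of `G ∨ G'`, so
`P(G, p) P(G', q) ≤ P(G ∨ G', p + q)`. Take `p = k m`, `q = k' m` and divide by
`C((k + k') m, k + k')`: the normalized densities multiply up to the factor
`C(k m, k) C(k' m, k') / C((k + k') m, k + k')`, which tends to
`(k + k')! k^k k'^k' / (k! k'! (k + k')^(k + k'))` because `C(n, j) ~ n^j / j!`.
-/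

open Finset Filter Topology Asymptotics

namespace SimpleGraph

variable {α β γ δ : Type*}

theorem nonempty_induce_iso_iff {H : SimpleGraph α} {F : SimpleGraph γ} {s : Set γ} :
    Nonempty (F.induce s ≃g H) ↔ ∃ e : H ↪g F, Set.range e = s := by
  constructor
  · rintro ⟨ψ⟩
    refine ⟨(Embedding.induce s).comp ψ.symm.toEmbedding, ?_⟩
    ext x
    simp
  · rintro ⟨e, rfl⟩
    exact ⟨e.isoInduceRange.symm⟩

def Embedding.join {G : SimpleGraph α} {G' : SimpleGraph β} {F : SimpleGraph γ}
    {F' : SimpleGraph δ} (e : G ↪g F) (e' : G' ↪g F') : joinGraph G G' ↪g joinGraph F F' where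
  toEmbedding := e.toEmbedding.sumMap e'.toEmbedding
  map_rel_iff' := by
    rintro (x | x) (y | y) <;> simp [joinGraph]

theorem Embedding.range_join {G : SimpleGraph α} {G' : SimpleGraph β} {F : SimpleGraph γ}
    {F' : SimpleGraph δ} (e : G ↪g F) (e' : G' ↪g F') :
    Set.range (e.join e') = Sum.inl '' Set.range e ∪ Sum.inr '' Set.range e' := by
  ext (x | x) <;> simp [Embedding.join]

end SimpleGraph

section Counting

variable {α β γ δ : Type*} [Fintype α] [Fintype β] [Fintype γ] [Fintype δ]

theorem inducedCount_le_of_embedding (H : SimpleGraph α) {F : SimpleGraph γ}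
    {F' : SimpleGraph δ} (φ : F ↪g F') : inducedCount H F ≤ inducedCount H F' := by
  refine card_le_card_of_injOn (fun S => S.map φ.toEmbedding) ?_ (Finset.map_injective _).injOn
  intro S hS
  simp only [coe_filter, mem_univ, true_and, Set.mem_ofPred_eq,
    SimpleGraph.nonempty_induce_iso_iff] at hS ⊢
  obtain ⟨hcard, e, he⟩ := hS
  refine ⟨by rw [card_map, hcard], φ.comp e, ?_⟩
  rw [coe_map, ← he, ← Set.range_comp]
  rfl

theorem inducedCount_mul_le_join (G : SimpleGraph α) (G' : SimpleGraph β)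
    (F : SimpleGraph γ) (F' : SimpleGraph δ) :
    inducedCount G F * inducedCount G' F' ≤ inducedCount (joinGraph G G') (joinGraph F F') := by
  rw [inducedCount, inducedCount, ← card_product]
  refine card_le_card_of_injOn (fun p => p.1.disjSum p.2) ?_ ?_
  · rintro ⟨S, S'⟩ hS
    simp only [coe_product, coe_filter, mem_univ, true_and, Set.mem_prod, Set.mem_ofPred_eq,
      SimpleGraph.nonempty_induce_iso_iff] at hS ⊢
    obtain ⟨⟨hcard, e, he⟩, hcard', e', he'⟩ := hS
    refine ⟨by rw [card_disjSum, hcard, hcard', Fintype.card_sum], e.join e', ?_⟩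
    rw [SimpleGraph.Embedding.range_join, he, he']
    ext (x | x) <;> simp
  · rintro ⟨S, S'⟩ _ ⟨T, T'⟩ _ h
    obtain ⟨rfl, rfl⟩ := disjSum_inj.mp h
    rfl

theorem inducedCount_le_maxInducedCount (H : SimpleGraph α) (F : SimpleGraph γ) :
    inducedCount H F ≤ maxInducedCount H (Fintype.card γ) :=
  (inducedCount_le_of_embedding H (SimpleGraph.Iso.map (Fintype.equivFin γ) F).toEmbedding).trans
    (le_csSup (Set.finite_range _).bddAbove ⟨_, rfl⟩)

theorem exists_inducedCount_eq_maxInducedCount (H : SimpleGraph α) (n : ℕ) :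
    ∃ F : SimpleGraph (Fin n), inducedCount H F = maxInducedCount H n :=
  Nat.sSup_mem (s := Set.range (inducedCount H)) ⟨_, ⊥, rfl⟩ (Set.finite_range _).bddAbove

theorem maxInducedCount_mul_le_join (G : SimpleGraph α) (G' : SimpleGraph β) (p q : ℕ) :
    maxInducedCount G p * maxInducedCount G' q ≤ maxInducedCount (joinGraph G G') (p + q) := by
  obtain ⟨F, hF⟩ := exists_inducedCount_eq_maxInducedCount G p
  obtain ⟨F', hF'⟩ := exists_inducedCount_eq_maxInducedCount G' q
  rw [← hF, ← hF']
  simpa using (inducedCount_mul_le_join G G' F F').trans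
    (inducedCount_le_maxInducedCount _ (joinGraph F F'))

theorem maxInducedCount_div_choose_mul_le_join (G : SimpleGraph α) (G' : SimpleGraph β)
    (p q : ℕ) :
    (maxInducedCount G p : ℝ) / p.choose (Fintype.card α) *
        ((maxInducedCount G' q : ℝ) / q.choose (Fintype.card β)) *
        ((p.choose (Fintype.card α) : ℝ) * q.choose (Fintype.card β) /
          (p + q).choose (Fintype.card α + Fintype.card β)) ≤
      (maxInducedCount (joinGraph G G') (p + q) : ℝ) /
        (p + q).choose (Fintype.card α + Fintype.card β) := by
  set X : ℝ := (p.choose (Fintype.card α) : ℝ)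
  set Y : ℝ := (q.choose (Fintype.card β) : ℝ)
  calc _ = (maxInducedCount G p * maxInducedCount G' q : ℝ) /
          (p + q).choose (Fintype.card α + Fintype.card β) * (X / X) * (Y / Y) := by ring
    _ ≤ (maxInducedCount G p * maxInducedCount G' q : ℝ) /
          (p + q).choose (Fintype.card α + Fintype.card β) * 1 * 1 := by
        -- `X / X ≤ 1` also when `X = 0`, where `X / X = 0`
        gcongr <;> exact div_self_le_one _
    _ ≤ _ := by
        rw [mul_one, mul_one]
        gcongr
        exact_mod_cast maxInducedCount_mul_le_join G G' p q

end Counting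

theorem isEquivalent_choose_mul_self {j : ℕ} (hj : 0 < j) :
    (fun m : ℕ => ((j * m).choose j : ℝ)) ~[atTop] fun m => ((j * m : ℕ) : ℝ) ^ j / j.factorial :=
  (isEquivalent_choose j).comp_tendsto (tendsto_id.const_mul_atTop' hj)

theorem tendsto_choose_mul_div_choose {k k' : ℕ} (hk : 0 < k) (hk' : 0 < k') :
    Tendsto (fun m : ℕ => ((k * m).choose k : ℝ) * (k' * m).choose k' /
        ((k + k') * m).choose (k + k')) atTop
      (𝓝 ((k + k').factorial * (k : ℝ) ^ k * (k' : ℝ) ^ k' /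
        (k.factorial * k'.factorial * ((k + k' : ℕ) : ℝ) ^ (k + k')))) := by
  refine (((isEquivalent_choose_mul_self hk).mul (isEquivalent_choose_mul_self hk')).div
    (isEquivalent_choose_mul_self (add_pos hk hk'))).symm.tendsto_nhds
    (tendsto_const_nhds.congr' ?_)
  filter_upwards [eventually_ne_atTop 0] with m hm
  simp only [Pi.mul_apply, Pi.div_apply, Nat.cast_mul, mul_pow, pow_add]
  field_simp

/-- Pippenger–Golumbic, Theorem 6, disjunction case. For graphs `G` on
`k ≥ 1` vertices and `G'` on `k' ≥ 1` vertices, if the normalized maximum induced counts of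
`G`, `G'` and their join `G ∨ G'` converge to `a`, `b`, `c` respectively, then
`c ≥ ((k+k')! k^k k'^{k'} / (k! k'! (k+k')^{k+k'})) · a · b`. -/
theorem inducibility_join {α β : Type*} [Fintype α] [Fintype β]
    (G : SimpleGraph α) (G' : SimpleGraph β)
    (hk : 1 ≤ Fintype.card α) (hk' : 1 ≤ Fintype.card β) (a b c : ℝ)
    (ha : Filter.Tendsto
      (fun n : ℕ => (maxInducedCount G n : ℝ) / (n.choose (Fintype.card α) : ℝ))
      Filter.atTop (nhds a))
    (hb : Filter.Tendsto
      (fun n : ℕ => (maxInducedCount G' n : ℝ) / (n.choose (Fintype.card β) : ℝ))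
      Filter.atTop (nhds b))
    (hc : Filter.Tendsto
      (fun n : ℕ => (maxInducedCount (joinGraph G G') n : ℝ) /
        (n.choose (Fintype.card α + Fintype.card β) : ℝ))
      Filter.atTop (nhds c)) :
    ((Fintype.card α + Fintype.card β).factorial : ℝ) *
        (Fintype.card α : ℝ) ^ (Fintype.card α) * (Fintype.card β : ℝ) ^ (Fintype.card β) /
        (((Fintype.card α).factorial : ℝ) * ((Fintype.card β).factorial : ℝ) *
          ((Fintype.card α + Fintype.card β : ℕ) : ℝ) ^
            (Fintype.card α + Fintype.card β)) * a * b ≤ c := by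
  set k := Fintype.card α
  set k' := Fintype.card β
  have hkm : Tendsto (fun m : ℕ => k * m) atTop atTop := tendsto_id.const_mul_atTop' hk
  have hk'm : Tendsto (fun m : ℕ => k' * m) atTop atTop := tendsto_id.const_mul_atTop' hk'
  have hKm : Tendsto (fun m : ℕ => (k + k') * m) atTop atTop :=
    tendsto_id.const_mul_atTop' (add_pos hk hk')
  rw [mul_rotate]
  refine le_of_tendsto_of_tendsto'
    (((ha.comp hkm).mul (hb.comp hk'm)).mul (tendsto_choose_mul_div_choose hk hk'))
    (hc.comp hKm) fun m => ?_
  simpa only [Function.comp_apply, add_mul] using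
    maxInducedCount_div_choose_mul_le_join G G' (k * m) (k' * m)
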